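/- arXiv:0809.0853 — 6 statements merged into one kernel-verified Lean document; each statement's English description precedes it below -/
import Mathlib

section
/- Equality in the variational lower bound D_φ(P,Q) ≥ ∫ f dQ − ∫ φ*(f) dP is attained by any measurable function f with f(x) ∈ ∂φ(q₀(x)/p₀(x)) for μ-almost every x, where ∂φ denotes the subdifferential of φ. -/
/-!
Where `f x` is a subgradient of `φ` at `q x / p x`, the supremum defining `φ* (f x)` is attained at
`u = q x / p x` (equality in Fenchel–Young), so `p * φ* (f) = q * f - p * φ (q / p)` pointwise.
Writing the `P`- and `Q`-integrals as `μ`-integrals against the densities `p` and `q` and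
integrating this identity gives the claim.
-/

open MeasureTheory Real

section WithDensityOfReal

variable {X E : Type*} [MeasurableSpace X] {μ : Measure X}
  [NormedAddCommGroup E] [NormedSpace ℝ E] {p : X → ℝ}

theorem integral_withDensity_ofReal (hp : AEMeasurable p μ) (hp0 : 0 ≤ᵐ[μ] p) (g : X → E) :
    ∫ x, g x ∂μ.withDensity (fun x => ENNReal.ofReal (p x)) = ∫ x, p x • g x ∂μ := by
  rw [integral_withDensity_eq_integral_toReal_smul₀ hp.ennreal_ofReal
    (ae_of_all _ fun _ => ENNReal.ofReal_lt_top)]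
  refine integral_congr_ae ?_
  filter_upwards [hp0] with x hx
  rw [ENNReal.toReal_ofReal hx]

theorem integrable_withDensity_ofReal_iff (hp : AEMeasurable p μ) (hp0 : 0 ≤ᵐ[μ] p)
    {g : X → E} :
    Integrable g (μ.withDensity fun x => ENNReal.ofReal (p x)) ↔
      Integrable (fun x => p x • g x) μ := by
  rw [integrable_withDensity_iff_integrable_smul₀' hp.ennreal_ofReal
    (ae_of_all _ fun _ => ENNReal.ofReal_lt_top)]
  refine integrable_congr ?_
  filter_upwards [hp0] with x hx
  rw [ENNReal.toReal_ofReal hx]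

end WithDensityOfReal

theorem iSup_mul_sub_eq_of_subgradient {φ : ℝ → ℝ} {t z : ℝ}
    (h : ∀ s, φ t + z * (s - t) ≤ φ s) :
    ⨆ u, u * z - φ u = t * z - φ t :=
  ciSup_eq_of_forall_le_of_forall_lt_exists_gt (fun u => by linarith [h u])
    fun _ hw => ⟨t, hw⟩

theorem fdivergence_variational_equality_subdifferential_general
    {X : Type*} [MeasurableSpace X] (μ : Measure X)
    (P Q : Measure X)
    (p q : X → ℝ) (hpmeas : Measurable p) (hqmeas : Measurable q)
    (hppos : ∀ᵐ x ∂μ, 0 < p x) (hq : ∀ x, 0 ≤ q x)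
    (hP : P = μ.withDensity (fun x => ENNReal.ofReal (p x)))
    (hQ : Q = μ.withDensity (fun x => ENNReal.ofReal (q x)))
    (φ : ℝ → ℝ)
    (φstar : ℝ → ℝ) (hφstar : φstar = fun v => ⨆ u : ℝ, u * v - φ u)
    (f : X → ℝ)
    -- `f x` lies in the subdifferential of `φ` at `q x / p x`, μ-a.e.
    (hsub : ∀ᵐ x ∂μ, ∀ s : ℝ, φ (q x / p x) + f x * (s - q x / p x) ≤ φ s)
    (h1 : Integrable (fun x => p x * φ (q x / p x)) μ)
    (h2 : Integrable f Q) :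
    ∫ x, p x * φ (q x / p x) ∂μ = ∫ x, f x ∂Q - ∫ x, φstar (f x) ∂P := by
  subst hP hQ hφstar
  have hp0 : 0 ≤ᵐ[μ] p := hppos.mono fun _ hx => hx.le
  have hq0 : 0 ≤ᵐ[μ] q := ae_of_all _ hq
  have hqf : Integrable (fun x => q x * f x) μ :=
    (integrable_withDensity_ofReal_iff hqmeas.aemeasurable hq0).1 h2
  have hconj : ∀ᵐ x ∂μ, p x * (⨆ u, u * f x - φ u) = q x * f x - p x * φ (q x / p x) := by
    filter_upwards [hppos, hsub] with x hpx hsubx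
    rw [iSup_mul_sub_eq_of_subgradient hsubx]
    field_simp
  simp only [integral_withDensity_ofReal hpmeas.aemeasurable hp0,
    integral_withDensity_ofReal hqmeas.aemeasurable hq0, smul_eq_mul]
  rw [integral_congr_ae hconj, integral_sub hqf h1]
  ring

/-- Equality in the variational lower bound `D_φ(P,Q) ≥ ∫ f dQ − ∫ φ*(f) dP` is attained
by any measurable `f` with `f x ∈ ∂φ(q₀ x / p₀ x)` for μ-almost every `x`. -/
theorem fdivergence_variational_equality_subdifferential
    {X : Type*} [MeasurableSpace X] (μ : Measure X) [SigmaFinite μ]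
    (P Q : Measure X) [IsProbabilityMeasure P] [IsProbabilityMeasure Q]
    (p q : X → ℝ) (hpmeas : Measurable p) (hqmeas : Measurable q)
    (hppos : ∀ᵐ x ∂μ, 0 < p x) (hq : ∀ x, 0 ≤ q x)
    (hP : P = μ.withDensity (fun x => ENNReal.ofReal (p x)))
    (hQ : Q = μ.withDensity (fun x => ENNReal.ofReal (q x)))
    (φ : ℝ → ℝ) (hφ : ConvexOn ℝ Set.univ φ) (hlsc : LowerSemicontinuous φ)
    (φstar : ℝ → ℝ) (hφstar : φstar = fun v => ⨆ u : ℝ, u * v - φ u)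
    (f : X → ℝ) (hf : Measurable f)
    (hBdd : ∀ x, BddAbove (Set.range fun u : ℝ => u * f x - φ u))
    -- `f x` lies in the subdifferential of `φ` at `q x / p x`, μ-a.e.
    (hsub : ∀ᵐ x ∂μ, ∀ s : ℝ, φ (q x / p x) + f x * (s - q x / p x) ≤ φ s)
    (h1 : Integrable (fun x => p x * φ (q x / p x)) μ)
    (h2 : Integrable f Q)
    (h3 : Integrable (fun x => φstar (f x)) P) :
    ∫ x, p x * φ (q x / p x) ∂μ = ∫ x, f x ∂Q - ∫ x, φstar (f x) ∂P :=
  fdivergence_variational_equality_subdifferential_general μ P Q p q hpmeas hqmeas hppos hq hP hQ φ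
    φstar hφstar f hsub h1 h2
end

section
/- Let ĝₙ be the maximizer over a class G of g ↦ ∫ log g dPₙ − ∫ g dQₙ, where g₀ = dP/dQ ∈ G. Then d(g₀, ĝₙ) ≤ sup_{g ∈ G} |∫ log(g/g₀) d(Pₙ − P) − ∫ (g − g₀) d(Qₙ − Q)|, where d(g₀,g) := ∫(g−g₀) dQ − ∫ log(g/g₀) dP. -/
open MeasureTheory Real

/-! The basic inequality of M-estimation. Optimality of `ĝ` against the competitor `g₀`
says that the empirical gain `∫ log (ĝ/g₀) dPₙ − ∫ (ĝ − g₀) dQₙ` is nonnegative; adding it to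
`d(g₀, ĝ)` turns the population integrals into the empirical process evaluated at `ĝ`, which
is bounded by its absolute value and hence by the supremum over `G`. -/

section BasicInequality

variable {X : Type*} [MeasurableSpace X]

theorem integral_log_div {μ : Measure X} {f g : X → ℝ}
    (hf : ∀ x, f x ≠ 0) (hg : ∀ x, g x ≠ 0)
    (hfi : Integrable (fun x => log (f x)) μ) (hgi : Integrable (fun x => log (g x)) μ) :
    ∫ x, log (f x / g x) ∂μ = ∫ x, log (f x) ∂μ - ∫ x, log (g x) ∂μ := by
  rw [← integral_sub hfi hgi]
  exact integral_congr_ae (.of_forall fun x => log_div (hf x) (hg x))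

theorem empirical_gain_nonneg_of_le {Pn Qn : Measure X} {g₀ g : X → ℝ}
    (hg₀ : ∀ x, g₀ x ≠ 0) (hg : ∀ x, g x ≠ 0)
    (hg₀Q : Integrable g₀ Qn) (hgQ : Integrable g Qn)
    (hg₀P : Integrable (fun x => log (g₀ x)) Pn) (hgP : Integrable (fun x => log (g x)) Pn)
    (hle : ∫ x, log (g₀ x) ∂Pn - ∫ x, g₀ x ∂Qn ≤ ∫ x, log (g x) ∂Pn - ∫ x, g x ∂Qn) :
    0 ≤ ∫ x, log (g x / g₀ x) ∂Pn - ∫ x, (g x - g₀ x) ∂Qn := by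
  rw [integral_log_div hg hg₀ hgP hg₀P, integral_sub hgQ hg₀Q]
  linarith

theorem basic_inequality {P Q Pn Qn : Measure X} {g₀ g : X → ℝ}
    (hgain : 0 ≤ ∫ x, log (g x / g₀ x) ∂Pn - ∫ x, (g x - g₀ x) ∂Qn) :
    ∫ x, (g x - g₀ x) ∂Q - ∫ x, log (g x / g₀ x) ∂P
      ≤ (∫ x, log (g x / g₀ x) ∂Pn - ∫ x, log (g x / g₀ x) ∂P)
        - (∫ x, (g x - g₀ x) ∂Qn - ∫ x, (g x - g₀ x) ∂Q) := by
  linarith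

end BasicInequality

theorem estimator_E1_basic_inequality_general
    {X : Type*} [MeasurableSpace X] (Q : Measure X)
    (g0 : X → ℝ)
    (P : Measure X)
    (Pn Qn : Measure X)
    (G : Set (X → ℝ)) (hpos : ∀ g ∈ G, ∀ x, 0 < g x) (hg0G : g0 ∈ G)
    (ghat : X → ℝ) (hghatG : ghat ∈ G)
    -- ghat maximizes the empirical objective over G:
    (hopt : ∀ g ∈ G, ∫ x, Real.log (g x) ∂Pn - ∫ x, g x ∂Qn
      ≤ ∫ x, Real.log (ghat x) ∂Pn - ∫ x, ghat x ∂Qn)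
    -- the empirical process indexed by G:
    (E : (X → ℝ) → ℝ)
    (hE : E = fun g =>
      |(∫ x, Real.log (g x / g0 x) ∂Pn - ∫ x, Real.log (g x / g0 x) ∂P)
        - (∫ x, (g x - g0 x) ∂Qn - ∫ x, (g x - g0 x) ∂Q)|)
    (hbdd : BddAbove (Set.range fun g : G => E g))
    -- integrability of the relevant integrands:
    (hint : ∀ g ∈ G, Integrable g Q ∧ Integrable g Qn ∧
      Integrable (fun x => Real.log (g x / g0 x)) P ∧
      Integrable (fun x => Real.log (g x)) Pn) :
    ∫ x, (ghat x - g0 x) ∂Q - ∫ x, Real.log (ghat x / g0 x) ∂P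
      ≤ ⨆ g : G, E g := by
  obtain ⟨-, hg0Qn, -, hg0Pn⟩ := hint g0 hg0G
  obtain ⟨-, hghatQn, -, hghatPn⟩ := hint ghat hghatG
  have hgain := empirical_gain_nonneg_of_le (fun x => (hpos g0 hg0G x).ne')
    (fun x => (hpos ghat hghatG x).ne') hg0Qn hghatQn hg0Pn hghatPn (hopt g0 hg0G)
  calc _ ≤ _ := basic_inequality hgain
    _ ≤ E ghat := hE ▸ le_abs_self _
    _ ≤ ⨆ g : G, E g := le_ciSup hbdd (⟨ghat, hghatG⟩ : G)

/-- If `ghatₙ` maximizes `g ↦ ∫ log g dPₙ − ∫ g dQₙ` over `G ∋ g₀ = dP/dQ`, then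
`d(g₀, ghatₙ) ≤ sup_{g ∈ G} |∫ log(g/g₀) d(Pₙ−P) − ∫ (g−g₀) d(Qₙ−Q)|`, where
`d(g₀,g) = ∫ (g−g₀) dQ − ∫ log(g/g₀) dP`. -/
theorem estimator_E1_basic_inequality
    {X : Type*} [MeasurableSpace X] (Q : Measure X) [IsProbabilityMeasure Q]
    (g0 : X → ℝ) (hg0m : Measurable g0)
    (P : Measure X) (hP : P = Q.withDensity (fun x => ENNReal.ofReal (g0 x)))
    [IsProbabilityMeasure P]
    (Pn Qn : Measure X) [IsProbabilityMeasure Pn] [IsProbabilityMeasure Qn]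
    (G : Set (X → ℝ)) (hpos : ∀ g ∈ G, ∀ x, 0 < g x) (hg0G : g0 ∈ G)
    (ghat : X → ℝ) (hghatG : ghat ∈ G)
    -- ghat maximizes the empirical objective over G:
    (hopt : ∀ g ∈ G, ∫ x, Real.log (g x) ∂Pn - ∫ x, g x ∂Qn
      ≤ ∫ x, Real.log (ghat x) ∂Pn - ∫ x, ghat x ∂Qn)
    -- the empirical process indexed by G:
    (E : (X → ℝ) → ℝ)
    (hE : E = fun g =>
      |(∫ x, Real.log (g x / g0 x) ∂Pn - ∫ x, Real.log (g x / g0 x) ∂P)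
        - (∫ x, (g x - g0 x) ∂Qn - ∫ x, (g x - g0 x) ∂Q)|)
    (hbdd : BddAbove (Set.range fun g : G => E g))
    -- integrability of the relevant integrands:
    (hint : ∀ g ∈ G, Integrable g Q ∧ Integrable g Qn ∧
      Integrable (fun x => Real.log (g x / g0 x)) P ∧
      Integrable (fun x => Real.log (g x)) Pn) :
    ∫ x, (ghat x - g0 x) ∂Q - ∫ x, Real.log (ghat x / g0 x) ∂P
      ≤ ⨆ g : G, E g :=
  estimator_E1_basic_inequality_general Q g0 P Pn Qn G hpos hg0G ghat hghatG hopt E hE hbdd hint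
end

section
/- Let ĝₙ minimize over a convex class G the penalized objective g ↦ ∫ g dQₙ − ∫ log g dPₙ + (λ/2) I²(g), where I is a norm-like penalty (so that I² is convex) and g₀ = dP/dQ ∈ G. Then (1/4) h_Q²(g₀, ĝₙ) + (λ/2) I²(ĝₙ) ≤ −∫ (ĝₙ − g₀) d(Qₙ − Q) + 2∫ log((ĝₙ + g₀)/(2g₀)) d(Pₙ − P) + (λ/2) I²(g₀). -/
/-!
Compare `ĝ` with `g₀` in the optimality of `ĝ`. On the empirical side, concavity of `log` gives
`log ĝ + log g₀ ≤ 2 log ((ĝ + g₀) / 2)`, which trades `∫ log ĝ dPₙ` for the log-ratio at the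
midpoint. On the population side, with `m = (ĝ + g₀) / 2`, pointwise
`2 (√m - √g₀)² ≤ 2 (m - g₀) - 2 g₀ log (m / g₀)` (from `log t ≤ 2 (√t - 1)`) and
`(√ĝ - √g₀)² ≤ 16 (√m - √g₀)²`; integrating against `Q` and using `dP = g₀ dQ` turns the
log term into a `P`-integral.
-/

open MeasureTheory Real

namespace Real

theorem log_mul_le_two_mul_log_add_div_two {a b : ℝ} (ha : 0 < a) (hb : 0 < b) :
    log a + log b ≤ 2 * log ((a + b) / 2) := by
  calc log a + log b = log (a * b) := (log_mul ha.ne' hb.ne').symm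
    _ ≤ log (((a + b) / 2) ^ 2) := log_le_log (by positivity) (by nlinarith [sq_nonneg (a - b)])
    _ = 2 * log ((a + b) / 2) := by rw [log_pow]; norm_num

theorem log_le_two_mul_log_add_div_two_mul_add_log {a b : ℝ} (ha : 0 < a) (hb : 0 < b) :
    log b ≤ 2 * log ((b + a) / (2 * a)) + log a := by
  rw [← div_div, log_div (by positivity) ha.ne']
  linarith [log_mul_le_two_mul_log_add_div_two hb ha]

theorem sq_sqrt_sub_sqrt_le_sub_sub_mul_log_div {a m : ℝ} (ha : 0 < a) (hm : 0 < m) :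
    (√m - √a) ^ 2 ≤ m - a - a * log (m / a) := by
  have hlog : log (m / a) ≤ 2 * (√(m / a) - 1) := by
    have := log_le_sub_one_of_pos (sqrt_pos.2 (div_pos hm ha))
    rw [log_sqrt (div_pos hm ha).le] at this
    linarith
  have hsqrt : a * √(m / a) = √a * √m := by
    rw [sqrt_div' _ ha.le]
    field_simp
    rw [sq_sqrt ha.le]
  nlinarith [mul_le_mul_of_nonneg_left hlog ha.le, sq_sqrt ha.le, sq_sqrt hm.le]

theorem sq_sqrt_sub_sqrt_le_sixteen_mul_sq_sqrt_midpoint_sub {a b : ℝ} (ha : 0 ≤ a) (hb : 0 ≤ b) :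
    (√b - √a) ^ 2 ≤ 16 * (√((a + b) / 2) - √a) ^ 2 := by
  have hmid : 2 * √((a + b) / 2) ^ 2 = √a ^ 2 + √b ^ 2 := by
    rw [sq_sqrt ha, sq_sqrt hb, sq_sqrt (by positivity)]
    ring
  nlinarith [sq_nonneg (√((a + b) / 2) - √a), mul_nonneg (sqrt_nonneg ((a + b) / 2)) (sqrt_nonneg a),
    mul_nonneg (sqrt_nonneg b) (sqrt_nonneg a)]

theorem sq_sqrt_sub_sqrt_div_eight_le {a b : ℝ} (ha : 0 < a) (hb : 0 < b) :
    (√a - √b) ^ 2 / 8 ≤ b - a - 2 * (a * log ((b + a) / (2 * a))) := by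
  have hmid := sq_sqrt_sub_sqrt_le_sub_sub_mul_log_div ha (m := (b + a) / 2) (by positivity)
  rw [div_div] at hmid
  have hsixteen := sq_sqrt_sub_sqrt_le_sixteen_mul_sq_sqrt_midpoint_sub ha.le hb.le
  rw [add_comm a b] at hsixteen
  rw [← neg_sub, neg_sq]
  linarith

end Real

section

variable {X : Type*} [MeasurableSpace X]

theorem integral_log_le_two_mul_integral_log_midpoint_div_add {μ : Measure X} {f g : X → ℝ}
    (hf : ∀ x, 0 < f x) (hg : ∀ x, 0 < g x) (hlogf : Integrable (fun x => log (f x)) μ)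
    (hlogg : Integrable (fun x => log (g x)) μ)
    (hlogmid : Integrable (fun x => log ((f x + g x) / (2 * g x))) μ) :
    ∫ x, log (f x) ∂μ ≤ 2 * ∫ x, log ((f x + g x) / (2 * g x)) ∂μ + ∫ x, log (g x) ∂μ := by
  rw [← integral_const_mul, ← integral_add (hlogmid.const_mul 2) hlogg]
  exact integral_mono hlogf ((hlogmid.const_mul 2).add hlogg) fun x =>
    log_le_two_mul_log_add_div_two_mul_add_log (hg x) (hf x)

theorem integral_sq_sqrt_sub_sqrt_div_eight_le {Q : Measure X} {f g : X → ℝ} (hgm : Measurable g)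
    (hf : ∀ x, 0 < f x) (hg : ∀ x, 0 < g x) (hfQ : Integrable f Q) (hgQ : Integrable g Q)
    (hsq : Integrable (fun x => (√(g x) - √(f x)) ^ 2) Q)
    (hlogmid : Integrable (fun x => log ((f x + g x) / (2 * g x)))
      (Q.withDensity fun x => ENNReal.ofReal (g x))) :
    (∫ x, (√(g x) - √(f x)) ^ 2 ∂Q) / 8 ≤ ∫ x, (f x - g x) ∂Q
      - 2 * ∫ x, log ((f x + g x) / (2 * g x)) ∂Q.withDensity fun x => ENNReal.ofReal (g x) := by
  have hdens : ∀ x, (ENNReal.ofReal (g x)).toReal = g x := fun x =>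
    ENNReal.toReal_ofReal (hg x).le
  have hmeas : Measurable fun x => ENNReal.ofReal (g x) := ENNReal.measurable_ofReal.comp hgm
  have hfinite : ∀ᵐ x ∂Q, ENNReal.ofReal (g x) < ⊤ := .of_forall fun _ => ENNReal.ofReal_lt_top
  rw [integrable_withDensity_iff hmeas hfinite] at hlogmid
  have hlogmid' : Integrable (fun x => 2 * (g x * log ((f x + g x) / (2 * g x)))) Q :=
    (hlogmid.const_mul 2).congr (.of_forall fun x => by simp only [hdens]; ring)
  have hdiff : Integrable (fun x => f x - g x) Q := hfQ.sub hgQ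
  rw [integral_withDensity_eq_integral_toReal_smul hmeas hfinite]
  simp only [hdens, smul_eq_mul]
  calc (∫ x, (√(g x) - √(f x)) ^ 2 ∂Q) / 8 = ∫ x, (√(g x) - √(f x)) ^ 2 / 8 ∂Q :=
        (integral_div _ _).symm
    _ ≤ ∫ x, (f x - g x - 2 * (g x * log ((f x + g x) / (2 * g x)))) ∂Q :=
        integral_mono (hsq.div_const 8) (hdiff.sub hlogmid') fun x =>
          sq_sqrt_sub_sqrt_div_eight_le (hg x) (hf x)
    _ = _ := by rw [integral_sub hdiff hlogmid', integral_const_mul]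

end

theorem estimator_E2_basic_inequality_general
    {X : Type*} [MeasurableSpace X] (Q : Measure X)
    (g0 : X → ℝ) (hg0m : Measurable g0)
    (P : Measure X) (hP : P = Q.withDensity (fun x => ENNReal.ofReal (g0 x)))
    (Pn Qn : Measure X)
    (G : Set (X → ℝ))
    (hpos : ∀ g ∈ G, ∀ x, 0 < g x) (hg0G : g0 ∈ G)
    (I : (X → ℝ) → ℝ)
    (lam : ℝ)
    (ghat : X → ℝ) (hghatG : ghat ∈ G)
    -- ghat minimizes the penalized empirical objective over G:
    (hopt : ∀ g ∈ G,
      ∫ x, ghat x ∂Qn - ∫ x, Real.log (ghat x) ∂Pn + lam / 2 * (I ghat) ^ 2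
        ≤ ∫ x, g x ∂Qn - ∫ x, Real.log (g x) ∂Pn + lam / 2 * (I g) ^ 2)
    -- integrability of the relevant integrands:
    (hint : ∀ g ∈ G, Integrable g Q ∧ Integrable g Qn ∧
      Integrable (fun x => Real.log (g x)) Pn ∧
      Integrable (fun x => Real.log ((g x + g0 x) / (2 * g0 x))) P ∧
      Integrable (fun x => Real.log ((g x + g0 x) / (2 * g0 x))) Pn ∧
      Integrable (fun x => (Real.sqrt (g0 x) - Real.sqrt (g x)) ^ 2) Q) :
    (1 / 4) * ((1 / 2) * ∫ x, (Real.sqrt (g0 x) - Real.sqrt (ghat x)) ^ 2 ∂Q)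
        + lam / 2 * (I ghat) ^ 2
      ≤ -(∫ x, (ghat x - g0 x) ∂Qn - ∫ x, (ghat x - g0 x) ∂Q)
        + 2 * (∫ x, Real.log ((ghat x + g0 x) / (2 * g0 x)) ∂Pn
            - ∫ x, Real.log ((ghat x + g0 x) / (2 * g0 x)) ∂P)
        + lam / 2 * (I g0) ^ 2 := by
  obtain ⟨hg0Q, hg0Qn, hlogg0Pn, -⟩ := hint g0 hg0G
  obtain ⟨hghatQ, hghatQn, hlogghatPn, hlogmidP, hlogmidPn, hsqQ⟩ := hint ghat hghatG
  have hempirical := integral_log_le_two_mul_integral_log_midpoint_div_add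
    (hpos ghat hghatG) (hpos g0 hg0G) hlogghatPn hlogg0Pn hlogmidPn
  subst hP
  have hpopulation := integral_sq_sqrt_sub_sqrt_div_eight_le hg0m
    (hpos ghat hghatG) (hpos g0 hg0G) hghatQ hg0Q hsqQ hlogmidP
  have hoptg0 := hopt g0 hg0G
  rw [integral_sub hghatQn hg0Qn]
  linarith

/-- Basic inequality for the penalized estimator E2: if `ghat` minimizes
`g ↦ ∫ g dQₙ − ∫ log g dPₙ + (λ/2) I²(g)` over a convex class `G ∋ g₀ = dP/dQ`, then
`(1/4) h_Q²(g₀, ghat) + (λ/2) I²(ghat)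
  ≤ −∫ (ghat−g₀) d(Qₙ−Q) + 2 ∫ log((ghat+g₀)/(2g₀)) d(Pₙ−P) + (λ/2) I²(g₀)`. -/
theorem estimator_E2_basic_inequality
    {X : Type*} [MeasurableSpace X] (Q : Measure X) [IsProbabilityMeasure Q]
    (g0 : X → ℝ) (hg0m : Measurable g0)
    (P : Measure X) (hP : P = Q.withDensity (fun x => ENNReal.ofReal (g0 x)))
    [IsProbabilityMeasure P]
    (Pn Qn : Measure X) [IsProbabilityMeasure Pn] [IsProbabilityMeasure Qn]
    (G : Set (X → ℝ)) (hGconv : Convex ℝ G)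
    (hpos : ∀ g ∈ G, ∀ x, 0 < g x) (hg0G : g0 ∈ G)
    (I : (X → ℝ) → ℝ) (hInonneg : ∀ g, 0 ≤ I g)
    (hI2conv : ConvexOn ℝ G (fun g => (I g) ^ 2))
    (lam : ℝ) (hlam : 0 < lam)
    (ghat : X → ℝ) (hghatG : ghat ∈ G)
    -- ghat minimizes the penalized empirical objective over G:
    (hopt : ∀ g ∈ G,
      ∫ x, ghat x ∂Qn - ∫ x, Real.log (ghat x) ∂Pn + lam / 2 * (I ghat) ^ 2
        ≤ ∫ x, g x ∂Qn - ∫ x, Real.log (g x) ∂Pn + lam / 2 * (I g) ^ 2)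
    -- integrability of the relevant integrands:
    (hint : ∀ g ∈ G, Integrable g Q ∧ Integrable g Qn ∧
      Integrable (fun x => Real.log (g x)) Pn ∧
      Integrable (fun x => Real.log ((g x + g0 x) / (2 * g0 x))) P ∧
      Integrable (fun x => Real.log ((g x + g0 x) / (2 * g0 x))) Pn ∧
      Integrable (fun x => (Real.sqrt (g0 x) - Real.sqrt (g x)) ^ 2) Q) :
    (1 / 4) * ((1 / 2) * ∫ x, (Real.sqrt (g0 x) - Real.sqrt (ghat x)) ^ 2 ∂Q)
        + lam / 2 * (I ghat) ^ 2
      ≤ -(∫ x, (ghat x - g0 x) ∂Qn - ∫ x, (ghat x - g0 x) ∂Q)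
        + 2 * (∫ x, Real.log ((ghat x + g0 x) / (2 * g0 x)) ∂Pn
            - ∫ x, Real.log ((ghat x + g0 x) / (2 * g0 x)) ∂P)
        + lam / 2 * (I g0) ^ 2 :=
  estimator_E2_basic_inequality_general Q g0 hg0m P hP Pn Qn G hpos hg0G I lam ghat hghatG hopt hint
end

section
/- Let ĝₙ be the empirical maximizer defining estimator E1 with g₀ ∈ G, and consider the midpoint (ĝₙ+g₀)/2. Then (1/8) h_Q²(g₀, ĝₙ) ≤ 2 h_Q²(g₀, (g₀+ĝₙ)/2) ≤ −∫ ((ĝₙ − g₀)/2) d(Qₙ − Q) + ∫ log((ĝₙ + g₀)/(2g₀)) d(Pₙ − P). -/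
/-!
The empirical objective `L(g) = ∫ g dQₙ - ∫ log g dPₙ` is convex, so the midpoint `m = (g₀ + ĝ)/2`
inherits `L(m) ≤ L(g₀)` from `ĝ` (concavity of `log`). Its population counterpart, with
`dP = g₀ dQ`, is the Bregman divergence `∫ (m - g₀) dQ - ∫ g₀ log (m / g₀) dQ`, which dominates
`∫ (√g₀ - √m)² dQ` pointwise because `log t ≤ 2 (√t - 1)`. Subtracting the empirical inequality from
the population one gives the second bound. The first is pointwise: `√g₀ - √ĝ` and `√g₀ - √m` differ
by the factor `2 (√g₀ + √m) / (√g₀ + √ĝ) ≤ 4`.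
-/

open MeasureTheory Real

lemma sq_sqrt_sub_sqrt_le_sixteen_mul_sq_sqrt_sub_sqrt_midpoint {a b : ℝ} (ha : 0 ≤ a)
    (hb : 0 ≤ b) :
    (√a - √b) ^ 2 ≤ 16 * (√a - √((a + b) / 2)) ^ 2 := by
  set u := √a
  set v := √b
  set w := √((a + b) / 2)
  have hu : 0 ≤ u := sqrt_nonneg a
  have hv : 0 ≤ v := sqrt_nonneg b
  have hw : 0 ≤ w := sqrt_nonneg _
  have hw2 : w ^ 2 = (u ^ 2 + v ^ 2) / 2 := by
    rw [sq_sqrt ha, sq_sqrt hb, sq_sqrt (by positivity)]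
  have hdiff : (u - v) * (u + v) = 2 * ((u - w) * (u + w)) := by linear_combination 2 * hw2
  have hw_le : w ≤ u + v := by nlinarith
  have habs : |u - v| ≤ 4 * |u - w| := by
    rcases (add_nonneg hu hv).eq_or_lt with h0 | hpos
    · have : u = 0 ∧ v = 0 := by constructor <;> linarith
      simp [this.1, this.2]
    refine le_of_mul_le_mul_right ?_ hpos
    calc |u - v| * (u + v) = 2 * |u - w| * (u + w) := by
          rw [← abs_of_pos hpos, ← abs_mul, hdiff, abs_mul, abs_mul,
            abs_of_nonneg (add_nonneg hu hw)]
          norm_num; ring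
      _ ≤ 2 * |u - w| * (2 * (u + v)) := by gcongr; linarith
      _ = 4 * |u - w| * (u + v) := by ring
  calc (u - v) ^ 2 = |u - v| ^ 2 := (sq_abs _).symm
    _ ≤ (4 * |u - w|) ^ 2 := by gcongr
    _ = 16 * (u - w) ^ 2 := by rw [mul_pow, sq_abs]; norm_num

lemma sq_sqrt_sub_sqrt_le_sub_sub_mul_log_div {a m : ℝ} (ha : 0 < a) (hm : 0 < m) :
    (√a - √m) ^ 2 ≤ m - a - a * log (m / a) := by
  have hratio : m / a = (√m / √a) ^ 2 := by rw [div_pow, sq_sqrt ha.le, sq_sqrt hm.le]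
  have hlog : log (√m / √a) ≤ √m / √a - 1 := log_le_sub_one_of_pos (by positivity)
  have key : a * log (m / a) ≤ 2 * (√a * √m - a) :=
    calc a * log (m / a) = 2 * a * log (√m / √a) := by rw [hratio, log_pow]; push_cast; ring
      _ ≤ 2 * a * (√m / √a - 1) := by gcongr
      _ = 2 * (√a * √m - a) := by
          rw [show 2 * a * (√m / √a - 1) = 2 * (a / √a * √m - a) by ring, div_sqrt]
  nlinarith [sq_sqrt ha.le, sq_sqrt hm.le]

lemma half_log_sub_log_le_log_add_div {a b : ℝ} (ha : 0 < a) (hb : 0 < b) :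
    (log a - log b) / 2 ≤ log ((a + b) / (2 * b)) := by
  have hconc : 1 / 2 * log a + 1 / 2 * log b ≤ log (1 / 2 * a + 1 / 2 * b) :=
    strictConcaveOn_log_Ioi.concaveOn.2 ha hb (by norm_num) (by norm_num) (by norm_num)
  rw [show 1 / 2 * a + 1 / 2 * b = (a + b) / 2 by ring] at hconc
  rw [show (a + b) / (2 * b) = (a + b) / 2 / b by ring, log_div (by positivity) hb.ne']
  linarith

section

variable {X : Type*} [MeasurableSpace X]

lemma integral_withDensity_ofReal_s11 {μ : Measure X} {g : X → ℝ} (hgm : Measurable g)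
    (hg : ∀ x, 0 ≤ g x) (f : X → ℝ) :
    ∫ x, f x ∂μ.withDensity (fun x => ENNReal.ofReal (g x)) = ∫ x, g x * f x ∂μ := by
  rw [integral_withDensity_eq_integral_toReal_smul hgm.ennreal_ofReal
    (.of_forall fun _ => ENNReal.ofReal_lt_top)]
  simp only [ENNReal.toReal_ofReal (hg _), smul_eq_mul]

lemma integrable_withDensity_ofReal_iff_s11 {μ : Measure X} {g : X → ℝ} (hgm : Measurable g)
    (hg : ∀ x, 0 ≤ g x) {f : X → ℝ} :
    Integrable f (μ.withDensity fun x => ENNReal.ofReal (g x)) ↔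
      Integrable (fun x => g x * f x) μ := by
  rw [integrable_withDensity_iff_integrable_smul' hgm.ennreal_ofReal
    (.of_forall fun _ => ENNReal.ofReal_lt_top)]
  simp only [ENNReal.toReal_ofReal (hg _), smul_eq_mul]

lemma integral_sq_sqrt_sub_sqrt_le_integral_sub_sub_integral_log_div
    {Q : Measure X} {g₀ m : X → ℝ} (hg₀m : Measurable g₀) (hg₀ : ∀ x, 0 < g₀ x) (hm : ∀ x, 0 < m x)
    (hmi : Integrable m Q) (hg₀i : Integrable g₀ Q)
    (hlogi : Integrable (fun x => log (m x / g₀ x)) (Q.withDensity fun x => ENNReal.ofReal (g₀ x)))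
    (hsqi : Integrable (fun x => (√(g₀ x) - √(m x)) ^ 2) Q) :
    ∫ x, (√(g₀ x) - √(m x)) ^ 2 ∂Q ≤
      ∫ x, (m x - g₀ x) ∂Q -
        ∫ x, log (m x / g₀ x) ∂Q.withDensity fun x => ENNReal.ofReal (g₀ x) := by
  have hg₀' : ∀ x, 0 ≤ g₀ x := fun x => (hg₀ x).le
  rw [integrable_withDensity_ofReal_iff_s11 hg₀m hg₀'] at hlogi
  have hdi : Integrable (fun x => m x - g₀ x) Q := hmi.sub hg₀i
  rw [integral_withDensity_ofReal_s11 hg₀m hg₀', ← integral_sub hdi hlogi]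
  exact integral_mono hsqi (hdi.sub hlogi)
    fun x => sq_sqrt_sub_sqrt_le_sub_sub_mul_log_div (hg₀ x) (hm x)

lemma integral_half_sub_le_integral_log_midpoint_div {μ ν : Measure X} {g₀ g : X → ℝ}
    (hg₀ : ∀ x, 0 < g₀ x) (hg : ∀ x, 0 < g x)
    (hgi : Integrable g μ) (hg₀i : Integrable g₀ μ)
    (hloggi : Integrable (fun x => log (g x)) ν) (hlogg₀i : Integrable (fun x => log (g₀ x)) ν)
    (hmidi : Integrable (fun x => log ((g x + g₀ x) / (2 * g₀ x))) ν)
    (hle : ∫ x, g x ∂μ - ∫ x, log (g x) ∂ν ≤ ∫ x, g₀ x ∂μ - ∫ x, log (g₀ x) ∂ν) :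
    ∫ x, (g x - g₀ x) / 2 ∂μ ≤ ∫ x, log ((g x + g₀ x) / (2 * g₀ x)) ∂ν :=
  calc ∫ x, (g x - g₀ x) / 2 ∂μ = (∫ x, g x ∂μ - ∫ x, g₀ x ∂μ) / 2 := by
        rw [integral_div, integral_sub hgi hg₀i]
    _ ≤ (∫ x, log (g x) ∂ν - ∫ x, log (g₀ x) ∂ν) / 2 := by linarith
    _ = ∫ x, (log (g x) - log (g₀ x)) / 2 ∂ν := by
        rw [integral_div, integral_sub hloggi hlogg₀i]
    _ ≤ ∫ x, log ((g x + g₀ x) / (2 * g₀ x)) ∂ν :=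
        integral_mono ((hloggi.sub hlogg₀i).div_const 2) hmidi
          fun x => half_log_sub_log_le_log_add_div (hg x) (hg₀ x)

end

theorem estimator_E1_hellinger_inequality_general
    {X : Type*} [MeasurableSpace X] (Q : Measure X)
    (g0 : X → ℝ) (hg0m : Measurable g0) (hg0pos : ∀ x, 0 < g0 x)
    (P : Measure X) (hP : P = Q.withDensity (fun x => ENNReal.ofReal (g0 x)))
    (Pn Qn : Measure X)
    (ghat : X → ℝ) (hghatpos : ∀ x, 0 < ghat x)
    -- ghat does at least as well as g₀ on the empirical objective:
    (hopt : ∫ x, ghat x ∂Qn - ∫ x, Real.log (ghat x) ∂Pn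
      ≤ ∫ x, g0 x ∂Qn - ∫ x, Real.log (g0 x) ∂Pn)
    -- integrability of the relevant integrands:
    (hint1 : Integrable ghat Q) (hint2 : Integrable g0 Q)
    (hint3 : Integrable ghat Qn) (hint4 : Integrable g0 Qn)
    (hint5 : Integrable (fun x => Real.log (ghat x)) Pn)
    (hint6 : Integrable (fun x => Real.log (g0 x)) Pn)
    (hint7 : Integrable (fun x => Real.log ((ghat x + g0 x) / (2 * g0 x))) P)
    (hint8 : Integrable (fun x => Real.log ((ghat x + g0 x) / (2 * g0 x))) Pn)
    (hint9 : Integrable (fun x => (Real.sqrt (g0 x) - Real.sqrt (ghat x)) ^ 2) Q)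
    (hint10 : Integrable
      (fun x => (Real.sqrt (g0 x) - Real.sqrt ((g0 x + ghat x) / 2)) ^ 2) Q) :
    (1 / 8) * ((1 / 2) * ∫ x, (Real.sqrt (g0 x) - Real.sqrt (ghat x)) ^ 2 ∂Q)
      ≤ 2 * ((1 / 2) * ∫ x, (Real.sqrt (g0 x) - Real.sqrt ((g0 x + ghat x) / 2)) ^ 2 ∂Q) ∧
    2 * ((1 / 2) * ∫ x, (Real.sqrt (g0 x) - Real.sqrt ((g0 x + ghat x) / 2)) ^ 2 ∂Q)
      ≤ -(∫ x, (ghat x - g0 x) / 2 ∂Qn - ∫ x, (ghat x - g0 x) / 2 ∂Q)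
        + (∫ x, Real.log ((ghat x + g0 x) / (2 * g0 x)) ∂Pn
            - ∫ x, Real.log ((ghat x + g0 x) / (2 * g0 x)) ∂P) := by
  have hmid : ∀ x, (g0 x + ghat x) / 2 - g0 x = (ghat x - g0 x) / 2 ∧
      (g0 x + ghat x) / 2 / g0 x = (ghat x + g0 x) / (2 * g0 x) := fun x =>
    ⟨by ring, by rw [div_div, add_comm]⟩
  have hcompare : ∫ x, (√(g0 x) - √(ghat x)) ^ 2 ∂Q
      ≤ 16 * ∫ x, (√(g0 x) - √((g0 x + ghat x) / 2)) ^ 2 ∂Q := by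
    rw [← integral_const_mul]
    exact integral_mono hint9 (hint10.const_mul 16) fun x =>
      sq_sqrt_sub_sqrt_le_sixteen_mul_sq_sqrt_sub_sqrt_midpoint (hg0pos x).le (hghatpos x).le
  have hpop := integral_sq_sqrt_sub_sqrt_le_integral_sub_sub_integral_log_div
    (m := fun x => (g0 x + ghat x) / 2) hg0m hg0pos (fun x => by linarith [hg0pos x, hghatpos x])
    ((hint2.add hint1).div_const 2) hint2 (by simpa only [hmid, ← hP] using hint7) hint10
  simp only [hmid, ← hP] at hpop
  have hemp := integral_half_sub_le_integral_log_midpoint_div hg0pos hghatpos hint3 hint4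
    hint5 hint6 hint8 hopt
  constructor <;> linarith

/-- For the empirical maximizer `ghat` of estimator E1 (with `g₀ = dP/dQ ∈ G`):
`(1/8) h_Q²(g₀, ghat) ≤ 2 h_Q²(g₀, (g₀+ghat)/2)
  ≤ −∫ ((ghat−g₀)/2) d(Qₙ−Q) + ∫ log((ghat+g₀)/(2g₀)) d(Pₙ−P)`. -/
theorem estimator_E1_hellinger_inequality
    {X : Type*} [MeasurableSpace X] (Q : Measure X) [IsProbabilityMeasure Q]
    (g0 : X → ℝ) (hg0m : Measurable g0) (hg0pos : ∀ x, 0 < g0 x)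
    (P : Measure X) (hP : P = Q.withDensity (fun x => ENNReal.ofReal (g0 x)))
    [IsProbabilityMeasure P]
    (Pn Qn : Measure X) [IsProbabilityMeasure Pn] [IsProbabilityMeasure Qn]
    (ghat : X → ℝ) (hghatm : Measurable ghat) (hghatpos : ∀ x, 0 < ghat x)
    -- ghat does at least as well as g₀ on the empirical objective:
    (hopt : ∫ x, ghat x ∂Qn - ∫ x, Real.log (ghat x) ∂Pn
      ≤ ∫ x, g0 x ∂Qn - ∫ x, Real.log (g0 x) ∂Pn)
    -- integrability of the relevant integrands:
    (hint1 : Integrable ghat Q) (hint2 : Integrable g0 Q)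
    (hint3 : Integrable ghat Qn) (hint4 : Integrable g0 Qn)
    (hint5 : Integrable (fun x => Real.log (ghat x)) Pn)
    (hint6 : Integrable (fun x => Real.log (g0 x)) Pn)
    (hint7 : Integrable (fun x => Real.log ((ghat x + g0 x) / (2 * g0 x))) P)
    (hint8 : Integrable (fun x => Real.log ((ghat x + g0 x) / (2 * g0 x))) Pn)
    (hint9 : Integrable (fun x => (Real.sqrt (g0 x) - Real.sqrt (ghat x)) ^ 2) Q)
    (hint10 : Integrable
      (fun x => (Real.sqrt (g0 x) - Real.sqrt ((g0 x + ghat x) / 2)) ^ 2) Q) :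
    (1 / 8) * ((1 / 2) * ∫ x, (Real.sqrt (g0 x) - Real.sqrt (ghat x)) ^ 2 ∂Q)
      ≤ 2 * ((1 / 2) * ∫ x, (Real.sqrt (g0 x) - Real.sqrt ((g0 x + ghat x) / 2)) ^ 2 ∂Q) ∧
    2 * ((1 / 2) * ∫ x, (Real.sqrt (g0 x) - Real.sqrt ((g0 x + ghat x) / 2)) ^ 2 ∂Q)
      ≤ -(∫ x, (ghat x - g0 x) / 2 ∂Qn - ∫ x, (ghat x - g0 x) / 2 ∂Q)
        + (∫ x, Real.log ((ghat x + g0 x) / (2 * g0 x)) ∂Pn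
            - ∫ x, Real.log ((ghat x + g0 x) / (2 * g0 x)) ∂P) :=
  estimator_E1_hellinger_inequality_general Q g0 hg0m hg0pos P hP Pn Qn ghat hghatpos hopt hint1
    hint2 hint3 hint4 hint5 hint6 hint7 hint8 hint9 hint10
end

section
/- Csiszár's inequality: for probability measures P ≪ Q with densities p₀, q₀, ∫ p₀ |log(p₀/q₀)| dμ ≤ D_K(P,Q) + 4 √(D_K(P,Q)), where D_K(P,Q) = ∫ p₀ log(p₀/q₀) dμ. -/
/-!
Split `|log (p₀/q₀)|` into its positive and negative parts, so that
`∫ p₀ |log (p₀/q₀)| = D_K(P,Q) + 2 ∫ p₀ (log (q₀/p₀))⁺`. From `log u ≤ 2 (√u - 1)` one gets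
pointwise `p₀ log (q₀/p₀) ≤ 2 √p₀ (√q₀ - √p₀)`. Integrated, this bounds the squared Hellinger
distance `∫ (√p₀ - √q₀)²` by `D_K(P,Q)`; and by Cauchy–Schwarz it bounds
`∫ p₀ (log (q₀/p₀))⁺` by `2 (∫ p₀)^{1/2} (∫ (√p₀ - √q₀)²)^{1/2} ≤ 2 √(D_K(P,Q))`.
-/

open MeasureTheory Real

section Pointwise

variable {a b : ℝ}

lemma mul_log_div_le_two_mul_sqrt_mul_sub (ha : 0 ≤ a) (hb : 0 ≤ b) (hab : b = 0 → a = 0) :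
    a * log (b / a) ≤ 2 * √a * (√b - √a) := by
  rcases ha.eq_or_lt with rfl | ha
  · simp
  have hb : 0 < b := hb.lt_of_ne' fun h => ha.ne' (hab h)
  calc a * log (b / a) = 2 * a * log √(b / a) := by rw [log_sqrt (by positivity)]; ring
    _ ≤ 2 * a * (√(b / a) - 1) := by gcongr; exact log_le_sub_one_of_pos (by positivity)
    _ = 2 * (a / √a) * √b - 2 * a := by rw [sqrt_div' _ ha.le]; ring
    _ = 2 * √a * (√b - √a) := by rw [div_sqrt]; linear_combination 2 * mul_self_sqrt ha.le

lemma mul_max_neg_log_div_le_two_mul_sqrt_mul_abs (ha : 0 ≤ a) (hb : 0 ≤ b)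
    (hab : b = 0 → a = 0) :
    a * max (-log (a / b)) 0 ≤ 2 * (√a * |√a - √b|) := by
  rw [← log_inv, inv_div, mul_max_of_nonneg _ _ ha, mul_zero]
  refine max_le ?_ (by positivity)
  calc a * log (b / a) ≤ 2 * √a * (√b - √a) := mul_log_div_le_two_mul_sqrt_mul_sub ha hb hab
    _ ≤ 2 * (√a * |√a - √b|) := by
      rw [mul_assoc, abs_sub_comm]
      gcongr
      exact le_abs_self _

lemma mul_max_neg_log_div_le (ha : 0 ≤ a) (hb : 0 ≤ b) (hab : b = 0 → a = 0) :
    a * max (-log (a / b)) 0 ≤ b := by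
  rw [← log_inv, inv_div, mul_max_of_nonneg _ _ ha, mul_zero]
  refine max_le ?_ hb
  nlinarith [mul_log_div_le_two_mul_sqrt_mul_sub ha hb hab, sq_nonneg (√a - √b),
    sq_sqrt ha, sq_sqrt hb]

lemma sq_sqrt_sub_sqrt_le_mul_log_div (ha : 0 ≤ a) (hb : 0 ≤ b) (hab : b = 0 → a = 0) :
    (√a - √b) ^ 2 ≤ a * log (a / b) + b - a := by
  have h := mul_log_div_le_two_mul_sqrt_mul_sub ha hb hab
  rw [← neg_neg (log (b / a)), ← log_inv, inv_div] at h
  nlinarith [sq_sqrt ha, sq_sqrt hb]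

end Pointwise

section Measure

variable {X : Type*} [MeasurableSpace X] {μ : Measure X}

lemma ae_eq_zero_of_withDensity_absolutelyContinuous {f g : X → ENNReal}
    (hf : AEMeasurable f μ) (hg : AEMeasurable g μ) (h : μ.withDensity f ≪ μ.withDensity g) :
    ∀ᵐ x ∂μ, g x = 0 → f x = 0 := by
  have hg_ne : ∀ᵐ x ∂μ.withDensity g, g x ≠ 0 :=
    (ae_withDensity_iff' hg).2 (ae_of_all _ fun _ => id)
  filter_upwards [(ae_withDensity_iff' hf).1 (h.ae_le hg_ne)] with x hx hgx
  by_contra hfx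
  exact hx hfx hgx

lemma integral_eq_one_of_isProbabilityMeasure_withDensity {p : X → ℝ} (hp : 0 ≤ᵐ[μ] p)
    (hpm : AEStronglyMeasurable p μ)
    [IsProbabilityMeasure (μ.withDensity fun x => ENNReal.ofReal (p x))] :
    ∫ x, p x ∂μ = 1 := by
  rw [integral_eq_lintegral_of_nonneg_ae hp hpm, ← setLIntegral_univ, ← withDensity_apply _ .univ,
    measure_univ, ENNReal.toReal_one]

lemma integral_mul_le_sqrt_integral_sq_mul_sqrt_integral_sq {f g : X → ℝ} (hf : 0 ≤ᵐ[μ] f)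
    (hg : 0 ≤ᵐ[μ] g) (hf2 : MemLp f 2 μ) (hg2 : MemLp g 2 μ) :
    ∫ x, f x * g x ∂μ ≤ √(∫ x, f x ^ 2 ∂μ) * √(∫ x, g x ^ 2 ∂μ) := by
  have := integral_mul_le_Lp_mul_Lq_of_nonneg HolderConjugate.two_two hf hg (by simpa) (by simpa)
  simpa only [rpow_two, sqrt_eq_rpow] using this

variable {p q : X → ℝ}

lemma integrable_sq_sqrt_sub_sqrt (hpm : Measurable p) (hqm : Measurable q)
    (hp : ∀ x, 0 ≤ p x) (hq : ∀ x, 0 ≤ q x) (hpi : Integrable p μ) (hqi : Integrable q μ) :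
    Integrable (fun x => (√(p x) - √(q x)) ^ 2) μ := by
  refine (hpi.add hqi).mono' ((hpm.sqrt.sub hqm.sqrt).pow_const 2).aestronglyMeasurable
    (ae_of_all _ fun x => ?_)
  rw [norm_of_nonneg (sq_nonneg _), Pi.add_apply]
  nlinarith [sq_sqrt (hp x), sq_sqrt (hq x), mul_nonneg (sqrt_nonneg (p x)) (sqrt_nonneg (q x))]

lemma integrable_mul_max_neg_log_div (hpm : Measurable p) (hqm : Measurable q)
    (hp : ∀ x, 0 ≤ p x) (hq : ∀ x, 0 ≤ q x) (hpq : ∀ᵐ x ∂μ, q x = 0 → p x = 0)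
    (hqi : Integrable q μ) :
    Integrable (fun x => p x * max (-log (p x / q x)) 0) μ := by
  refine hqi.mono' (hpm.mul ((hpm.div hqm).log.neg.max measurable_const)).aestronglyMeasurable ?_
  filter_upwards [hpq] with x hx
  rw [norm_of_nonneg (mul_nonneg (hp x) (le_max_right _ _))]
  exact mul_max_neg_log_div_le (hp x) (hq x) hx

lemma integral_sq_sqrt_sub_sqrt_le_integral_mul_log_div (hpm : Measurable p) (hqm : Measurable q)
    (hp : ∀ x, 0 ≤ p x) (hq : ∀ x, 0 ≤ q x) (hpq : ∀ᵐ x ∂μ, q x = 0 → p x = 0)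
    (hpi : Integrable p μ) (hqi : Integrable q μ)
    (hD : Integrable (fun x => p x * log (p x / q x)) μ) (hmass : ∫ x, q x ∂μ ≤ ∫ x, p x ∂μ) :
    ∫ x, (√(p x) - √(q x)) ^ 2 ∂μ ≤ ∫ x, p x * log (p x / q x) ∂μ := by
  have hDq : Integrable (fun x => p x * log (p x / q x) + q x) μ := hD.add hqi
  have hle : ∫ x, (√(p x) - √(q x)) ^ 2 ∂μ ≤ ∫ x, p x * log (p x / q x) + q x - p x ∂μ :=
    integral_mono_ae (integrable_sq_sqrt_sub_sqrt hpm hqm hp hq hpi hqi) (hDq.sub hpi)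
      (hpq.mono fun x hx => sq_sqrt_sub_sqrt_le_mul_log_div (hp x) (hq x) hx)
  rw [integral_sub hDq hpi, integral_add hD hqi] at hle
  linarith

lemma integral_mul_max_neg_log_div_le (hpm : Measurable p) (hqm : Measurable q)
    (hp : ∀ x, 0 ≤ p x) (hq : ∀ x, 0 ≤ q x) (hpq : ∀ᵐ x ∂μ, q x = 0 → p x = 0)
    (hpi : Integrable p μ) (hqi : Integrable q μ) :
    ∫ x, p x * max (-log (p x / q x)) 0 ∂μ
      ≤ 2 * (√(∫ x, p x ∂μ) * √(∫ x, (√(p x) - √(q x)) ^ 2 ∂μ)) := by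
  have hf2 : MemLp (fun x => √(p x)) 2 μ :=
    (memLp_two_iff_integrable_sq hpm.sqrt.aestronglyMeasurable).2 <|
      hpi.congr (ae_of_all _ fun x => (sq_sqrt (hp x)).symm)
  have hg2 : MemLp (fun x => |√(p x) - √(q x)|) 2 μ :=
    (memLp_two_iff_integrable_sq (hpm.sqrt.sub hqm.sqrt).abs.aestronglyMeasurable).2 <|
      (integrable_sq_sqrt_sub_sqrt hpm hqm hp hq hpi hqi).congr
        (ae_of_all _ fun x => (sq_abs _).symm)
  calc ∫ x, p x * max (-log (p x / q x)) 0 ∂μ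
      ≤ ∫ x, 2 * (√(p x) * |√(p x) - √(q x)|) ∂μ :=
        integral_mono_ae (integrable_mul_max_neg_log_div hpm hqm hp hq hpq hqi)
          ((hf2.integrable_mul hg2).const_mul 2)
          (hpq.mono fun x hx => mul_max_neg_log_div_le_two_mul_sqrt_mul_abs (hp x) (hq x) hx)
    _ ≤ 2 * (√(∫ x, √(p x) ^ 2 ∂μ) * √(∫ x, |√(p x) - √(q x)| ^ 2 ∂μ)) := by
        rw [integral_const_mul]
        gcongr
        exact integral_mul_le_sqrt_integral_sq_mul_sqrt_integral_sq
          (ae_of_all _ fun x => sqrt_nonneg _) (ae_of_all _ fun x => abs_nonneg _) hf2 hg2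
    _ = 2 * (√(∫ x, p x ∂μ) * √(∫ x, (√(p x) - √(q x)) ^ 2 ∂μ)) := by
        simp only [sq_sqrt (hp _), sq_abs]

end Measure

theorem csiszar_inequality_general
    {X : Type*} [MeasurableSpace X] (μ : Measure X)
    (P Q : Measure X) [IsProbabilityMeasure P] [IsProbabilityMeasure Q]
    (p q : X → ℝ) (hpmeas : Measurable p) (hqmeas : Measurable q)
    (hp : ∀ x, 0 ≤ p x) (hq : ∀ x, 0 ≤ q x)
    (hP : P = μ.withDensity (fun x => ENNReal.ofReal (p x)))
    (hQ : Q = μ.withDensity (fun x => ENNReal.ofReal (q x)))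
    (hPQ : P ≪ Q)
    -- D_K(P,Q) < ∞: the positive part of p₀ log(p₀/q₀) is integrable
    (hDfin : Integrable (fun x => p x * max (Real.log (p x / q x)) 0) μ) :
    Integrable (fun x => p x * |Real.log (p x / q x)|) μ ∧
    ∫ x, p x * |Real.log (p x / q x)| ∂μ
      ≤ (∫ x, p x * Real.log (p x / q x) ∂μ)
        + 4 * Real.sqrt (∫ x, p x * Real.log (p x / q x) ∂μ) := by
  subst hP hQ
  have hpq : ∀ᵐ x ∂μ, q x = 0 → p x = 0 := by
    filter_upwards [ae_eq_zero_of_withDensity_absolutelyContinuous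
      hpmeas.ennreal_ofReal.aemeasurable hqmeas.ennreal_ofReal.aemeasurable hPQ] with x hx hqx
    simpa [(hp x).ge_iff_eq', hqx] using hx
  have hp1 := integral_eq_one_of_isProbabilityMeasure_withDensity (μ := μ) (ae_of_all _ hp)
    hpmeas.aestronglyMeasurable
  have hq1 := integral_eq_one_of_isProbabilityMeasure_withDensity (μ := μ) (ae_of_all _ hq)
    hqmeas.aestronglyMeasurable
  have hpi : Integrable p μ := .of_integral_ne_zero (by simp [hp1])
  have hqi : Integrable q μ := .of_integral_ne_zero (by simp [hq1])
  have hN := integrable_mul_max_neg_log_div hpmeas hqmeas hp hq hpq hqi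
  have hD_eq : ∫ x, p x * log (p x / q x) ∂μ = ∫ x, p x * max (log (p x / q x)) 0 ∂μ
      - ∫ x, p x * max (-log (p x / q x)) 0 ∂μ := by
    simp only [← integral_sub hDfin hN, ← mul_sub, max_zero_sub_eq_self]
  have habs : (fun x => p x * |log (p x / q x)|) = fun x => p x * max (log (p x / q x)) 0
      + p x * max (-log (p x / q x)) 0 := by
    simp only [← mul_add, max_zero_add_max_neg_zero_eq_abs_self]
  have hD : Integrable (fun x => p x * log (p x / q x)) μ := by
    refine (hDfin.sub hN).congr (ae_of_all _ fun x => ?_)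
    simp only [Pi.sub_apply, ← mul_sub, max_zero_sub_eq_self]
  have hH := integral_sq_sqrt_sub_sqrt_le_integral_mul_log_div hpmeas hqmeas hp hq hpq hpi hqi hD
    (hq1.trans hp1.symm).le
  have hNle := integral_mul_max_neg_log_div_le hpmeas hqmeas hp hq hpq hpi hqi
  rw [hp1, sqrt_one, one_mul] at hNle
  rw [habs, integral_add hDfin hN]
  refine ⟨hDfin.add hN, ?_⟩
  linarith [sqrt_le_sqrt hH]

/-- Csiszár's inequality: for `P ≪ Q` with densities `p₀, q₀` w.r.t. `μ`,
`∫ p₀ |log(p₀/q₀)| dμ ≤ D_K(P,Q) + 4 √(D_K(P,Q))`; in particular the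
log-likelihood ratio is `P`-integrable whenever `D_K(P,Q) < ∞`. -/
theorem csiszar_inequality
    {X : Type*} [MeasurableSpace X] (μ : Measure X) [SigmaFinite μ]
    (P Q : Measure X) [IsProbabilityMeasure P] [IsProbabilityMeasure Q]
    (p q : X → ℝ) (hpmeas : Measurable p) (hqmeas : Measurable q)
    (hp : ∀ x, 0 ≤ p x) (hq : ∀ x, 0 ≤ q x)
    (hP : P = μ.withDensity (fun x => ENNReal.ofReal (p x)))
    (hQ : Q = μ.withDensity (fun x => ENNReal.ofReal (q x)))
    (hPQ : P ≪ Q)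
    -- D_K(P,Q) < ∞: the positive part of p₀ log(p₀/q₀) is integrable
    (hDfin : Integrable (fun x => p x * max (Real.log (p x / q x)) 0) μ) :
    Integrable (fun x => p x * |Real.log (p x / q x)|) μ ∧
    ∫ x, p x * |Real.log (p x / q x)| ∂μ
      ≤ (∫ x, p x * Real.log (p x / q x) ∂μ)
        + 4 * Real.sqrt (∫ x, p x * Real.log (p x / q x) ∂μ) :=
  csiszar_inequality_general μ P Q p q hpmeas hqmeas hp hq hP hQ hPQ hDfin
end

section
/- Let f̂ₙ maximize over a class F the map f ↦ ∫ f dQₙ − ∫ φ*(f) dPₙ, assume f₀ = ∂φ(q₀/p₀) ∈ F (so that D_φ(P,Q) = ∫ f₀ dQ − ∫ φ*(f₀) dP). Then the Bregman distance d_φ(f₀, f̂ₙ) := D_φ(P,Q) − (∫ f̂ₙ dQ − ∫ φ*(f̂ₙ) dP) satisfies d_φ(f₀, f̂ₙ) ≤ sup_{f ∈ F} |∫ (φ*(f) − φ*(f₀)) d(Pₙ − P) − ∫ (f − f₀) d(Qₙ − Q)|. -/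
/-!
Write `J_{P,Q}(f) = ∫ f dQ − ∫ φ*(f) dP`. By linearity of the integral, the empirical process at
`f` is `|(J_{P,Q}(f) − J_{P,Q}(f₀)) − (J_{Pₙ,Qₙ}(f) − J_{Pₙ,Qₙ}(f₀))|`. Since `f̂ₙ` does at least as
well as `f₀` for the empirical objective, the population loss `J_{P,Q}(f₀) − J_{P,Q}(f̂ₙ)` is at
most this process at `f̂ₙ ∈ F`, hence at most its supremum over `F`.
-/

open MeasureTheory Real

section

variable {X : Type*} [MeasurableSpace X]

noncomputable def variationalObjective (φstar : ℝ → ℝ) (μ ν : Measure X) (f : X → ℝ) : ℝ :=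
  ∫ x, f x ∂ν - ∫ x, φstar (f x) ∂μ

theorem variationalObjective_sub (φstar : ℝ → ℝ) {μ ν : Measure X} {f g : X → ℝ}
    (hf : Integrable f ν) (hg : Integrable g ν)
    (hφf : Integrable (fun x => φstar (f x)) μ) (hφg : Integrable (fun x => φstar (g x)) μ) :
    variationalObjective φstar μ ν f - variationalObjective φstar μ ν g
      = ∫ x, (f x - g x) ∂ν - ∫ x, (φstar (f x) - φstar (g x)) ∂μ := by
  rw [variationalObjective, variationalObjective, integral_sub hf hg, integral_sub hφf hφg]
  ring

end

theorem general_fdivergence_basic_inequality_general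
    {X : Type*} [MeasurableSpace X]
    (P Q Pn Qn : Measure X)
    (φstar : ℝ → ℝ)
    (F : Set (X → ℝ)) (f0 : X → ℝ) (hf0F : f0 ∈ F)
    (fhat : X → ℝ) (hfhatF : fhat ∈ F)
    -- fhat maximizes the empirical objective over F:
    (hopt : ∀ f ∈ F, ∫ x, f x ∂Qn - ∫ x, φstar (f x) ∂Pn
      ≤ ∫ x, fhat x ∂Qn - ∫ x, φstar (fhat x) ∂Pn)
    -- the empirical process indexed by F:
    (E : (X → ℝ) → ℝ)
    (hE : E = fun f =>
      |(∫ x, (φstar (f x) - φstar (f0 x)) ∂Pn - ∫ x, (φstar (f x) - φstar (f0 x)) ∂P)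
        - (∫ x, (f x - f0 x) ∂Qn - ∫ x, (f x - f0 x) ∂Q)|)
    (hbdd : BddAbove (Set.range fun f : F => E f))
    -- integrability of the relevant integrands:
    (hint : ∀ f ∈ F, Integrable f Q ∧ Integrable f Qn ∧
      Integrable (fun x => φstar (f x)) P ∧ Integrable (fun x => φstar (f x)) Pn) :
    (∫ x, f0 x ∂Q - ∫ x, φstar (f0 x) ∂P)
      - (∫ x, fhat x ∂Q - ∫ x, φstar (fhat x) ∂P)
      ≤ ⨆ f : F, E f := by
  set J := variationalObjective φstar P Q
  set Jn := variationalObjective φstar Pn Qn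
  obtain ⟨hQ0, hQn0, hP0, hPn0⟩ := hint f0 hf0F
  obtain ⟨hQ, hQn, hP, hPn⟩ := hint fhat hfhatF
  have hprocess : E fhat = |(J fhat - J f0) - (Jn fhat - Jn f0)| := by
    rw [variationalObjective_sub φstar hQ hQ0 hP hP0,
      variationalObjective_sub φstar hQn hQn0 hPn hPn0, hE]
    exact congrArg abs (by ring)
  have hempirical : Jn f0 ≤ Jn fhat := hopt f0 hf0F
  have hbasic : J f0 - J fhat ≤ E fhat := by
    rw [hprocess]
    linarith [neg_le_abs ((J fhat - J f0) - (Jn fhat - Jn f0))]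
  exact hbasic.trans (le_ciSup hbdd ⟨fhat, hfhatF⟩)

/-- General f-divergence version of the basic inequality: if `fhat` maximizes
`f ↦ ∫ f dQₙ − ∫ φ*(f) dPₙ` over `F ∋ f₀`, where
`D_φ(P,Q) = ∫ f₀ dQ − ∫ φ*(f₀) dP`, then the Bregman distance
`d_φ(f₀, fhat) = D_φ(P,Q) − (∫ fhat dQ − ∫ φ*(fhat) dP)` satisfies
`d_φ(f₀, fhat) ≤ sup_{f ∈ F} |∫ (φ*(f) − φ*(f₀)) d(Pₙ−P) − ∫ (f − f₀) d(Qₙ−Q)|`. -/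
theorem general_fdivergence_basic_inequality
    {X : Type*} [MeasurableSpace X]
    (P Q Pn Qn : Measure X) [IsProbabilityMeasure P] [IsProbabilityMeasure Q]
    [IsProbabilityMeasure Pn] [IsProbabilityMeasure Qn]
    (φstar : ℝ → ℝ)
    (F : Set (X → ℝ)) (f0 : X → ℝ) (hf0F : f0 ∈ F)
    (fhat : X → ℝ) (hfhatF : fhat ∈ F)
    -- fhat maximizes the empirical objective over F:
    (hopt : ∀ f ∈ F, ∫ x, f x ∂Qn - ∫ x, φstar (f x) ∂Pn
      ≤ ∫ x, fhat x ∂Qn - ∫ x, φstar (fhat x) ∂Pn)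
    -- the empirical process indexed by F:
    (E : (X → ℝ) → ℝ)
    (hE : E = fun f =>
      |(∫ x, (φstar (f x) - φstar (f0 x)) ∂Pn - ∫ x, (φstar (f x) - φstar (f0 x)) ∂P)
        - (∫ x, (f x - f0 x) ∂Qn - ∫ x, (f x - f0 x) ∂Q)|)
    (hbdd : BddAbove (Set.range fun f : F => E f))
    -- integrability of the relevant integrands:
    (hint : ∀ f ∈ F, Integrable f Q ∧ Integrable f Qn ∧
      Integrable (fun x => φstar (f x)) P ∧ Integrable (fun x => φstar (f x)) Pn) :
    (∫ x, f0 x ∂Q - ∫ x, φstar (f0 x) ∂P)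
      - (∫ x, fhat x ∂Q - ∫ x, φstar (fhat x) ∂P)
      ≤ ⨆ f : F, E f :=
  general_fdivergence_basic_inequality_general P Q Pn Qn φstar F f0 hf0F fhat hfhatF hopt E hE hbdd
    hint
end
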